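/- Let u ∈ ℝⁿ be a fixed vector and R an m×n random matrix with entries i.i.d. N(0, 2/m). Define v = ReLU(Ru) entrywise. Then E[‖v‖²] = ‖u‖². -/

import Mathlib

/-!
Each coordinate `(Ru)ᵢ = ∑ⱼ Rᵢⱼ uⱼ` is a sum of independent centred Gaussians, hence a centred
Gaussian of variance `(2/m) ‖u‖²`. A centred Gaussian `X` is symmetric, so `max(X,0)²` and
`max(-X,0)²` have the same mean; as they add up to `X²`, `E[max(X,0)²] = Var X / 2`. Each of the
`m` coordinates therefore contributes `‖u‖²/m`.
-/

open MeasureTheory ProbabilityTheory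
open scoped NNReal

lemma max_zero_sq_add_max_zero_sq_neg (x : ℝ) : max x 0 ^ 2 + max (-x) 0 ^ 2 = x ^ 2 := by
  rcases le_total x 0 with h | h <;> simp [h]

namespace ProbabilityTheory

section GaussianReal

variable (v : ℝ≥0)

lemma integrable_max_zero_sq_gaussianReal :
    Integrable (fun x : ℝ => max x 0 ^ 2) (gaussianReal 0 v) :=
  (memLp_id_gaussianReal 2).integrable_sq.mono' (by fun_prop) (ae_of_all _ fun x => by
    rw [Real.norm_eq_abs, abs_sq, id, ← max_zero_sq_add_max_zero_sq_neg x]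
    exact le_add_of_nonneg_right (sq_nonneg _))

lemma integral_max_zero_sq_gaussianReal :
    ∫ x, max x 0 ^ 2 ∂gaussianReal 0 v = v / 2 := by
  have hneg : Integrable (fun x : ℝ => max (-x) 0 ^ 2) (gaussianReal 0 v) :=
    (memLp_id_gaussianReal 2).integrable_sq.mono' (by fun_prop) (ae_of_all _ fun x => by
      rw [Real.norm_eq_abs, abs_sq, id, ← max_zero_sq_add_max_zero_sq_neg x]
      exact le_add_of_nonneg_left (sq_nonneg _))
  have hsymm : ∫ x, max (-x) 0 ^ 2 ∂gaussianReal 0 v = ∫ x, max x 0 ^ 2 ∂gaussianReal 0 v := by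
    conv_rhs => rw [← neg_zero, ← gaussianReal_map_neg, integral_map (by fun_prop) (by fun_prop)]
    rw [neg_zero]
  have hsecond : ∫ x, x ^ 2 ∂gaussianReal 0 v = v := by
    rw [← variance_of_integral_eq_zero aemeasurable_id' integral_id_gaussianReal,
      variance_fun_id_gaussianReal]
  have hsplit := integral_add (integrable_max_zero_sq_gaussianReal v) hneg
  simp only [max_zero_sq_add_max_zero_sq_neg, hsecond, hsymm] at hsplit
  linarith

end GaussianReal

variable {Ω : Type*} [MeasurableSpace Ω] {P : Measure Ω}

lemma iIndepFun.hasLaw_sum_gaussianReal [IsProbabilityMeasure P] {ι : Type*} [Fintype ι]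
    {X : ι → Ω → ℝ} {μ : ι → ℝ} {v : ι → ℝ≥0} (hind : iIndepFun X P)
    (hX : ∀ j, HasLaw (X j) (gaussianReal (μ j) (v j)) P) :
    HasLaw (fun ω => ∑ j, X j ω) (gaussianReal (∑ j, μ j) (∑ j, v j)) P := by
  have hgauss : HasGaussianLaw (fun ω => ∑ j, X j ω) P :=
    hind.hasGaussianLaw_fun_sum fun j => (hX j).hasGaussianLaw
  have hmean : P[fun ω => ∑ j, X j ω] = ∑ j, μ j := by
    rw [integral_finsetSum _ fun j _ => (hX j).hasGaussianLaw.integrable]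
    exact Finset.sum_congr rfl fun j _ => by rw [(hX j).integral_eq, integral_id_gaussianReal]
  have hvar : Var[fun ω => ∑ j, X j ω; P] = ∑ j, (v j : ℝ) := by
    rw [← Finset.sum_fn, IndepFun.variance_sum (fun j _ => (hX j).hasGaussianLaw.memLp_two)
      fun j _ k _ hjk => hind.indepFun hjk]
    exact Finset.sum_congr rfl fun j _ => by rw [(hX j).variance_eq, variance_id_gaussianReal]
  refine ⟨hgauss.aemeasurable, ?_⟩
  rw [hgauss.map_eq_gaussianReal, hmean, hvar, ← NNReal.coe_sum, Real.toNNReal_coe]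

lemma iIndepFun.hasLaw_dotProduct_gaussianReal [IsProbabilityMeasure P] {ι : Type*} [Fintype ι]
    {X : ι → Ω → ℝ} {v : ℝ≥0} (hind : iIndepFun X P)
    (hX : ∀ j, HasLaw (X j) (gaussianReal 0 v) P) (c : ι → ℝ) :
    HasLaw (fun ω => (fun j => X j ω) ⬝ᵥ c)
      (gaussianReal 0 (∑ j, .mk (c j ^ 2) (sq_nonneg _) * v)) P := by
  have hterm : ∀ j, HasLaw (fun ω => X j ω * c j)
      (gaussianReal 0 (.mk (c j ^ 2) (sq_nonneg _) * v)) P := fun j => by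
    simpa only [mul_zero] using gaussianReal_mul_const (hX j) (c j)
  simpa only [dotProduct, Function.comp_apply, Finset.sum_const_zero] using
    (hind.comp (fun j x => x * c j) fun j => by fun_prop).hasLaw_sum_gaussianReal hterm

variable {X : Ω → ℝ} {v : ℝ≥0}

lemma HasLaw.integrable_max_zero_sq (hX : HasLaw X (gaussianReal 0 v) P) :
    Integrable (fun ω => max (X ω) 0 ^ 2) P := by
  have h := integrable_max_zero_sq_gaussianReal v
  rwa [← hX.map_eq, integrable_map_measure (by fun_prop) hX.aemeasurable] at h

lemma HasLaw.integral_max_zero_sq (hX : HasLaw X (gaussianReal 0 v) P) :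
    ∫ ω, max (X ω) 0 ^ 2 ∂P = v / 2 := by
  rw [← integral_max_zero_sq_gaussianReal, ← hX.integral_comp (by fun_prop)]
  rfl

end ProbabilityTheory

/-- If `u ∈ ℝⁿ` is fixed and `R` is an `m×n` random matrix with entries i.i.d. `N(0, 2/m)`,
and `v = ReLU(Ru)` entrywise, then `E[‖v‖²] = ‖u‖²`. -/
theorem relu_layer_expected_norm {Ω : Type*} [MeasureSpace Ω]
    [IsProbabilityMeasure (ℙ : Measure Ω)]
    (m n : ℕ) (hm : 0 < m) (u : Fin n → ℝ)
    (R : Ω → Matrix (Fin m) (Fin n) ℝ)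
    (hmeas : ∀ i j, Measurable fun ω => R ω i j)
    (hgauss : ∀ i j, Measure.map (fun ω => R ω i j) ℙ =
      gaussianReal 0 (Real.toNNReal (2 / m)))
    (hindep : iIndepFun
      (fun (p : Fin m × Fin n) ω => R ω p.1 p.2) ℙ) :
    (∫ ω, ∑ i, (max ((R ω).mulVec u i) 0) ^ 2 ∂ℙ) = ∑ j, (u j) ^ 2 := by
  have hrow : ∀ i, HasLaw (fun ω => (R ω).mulVec u i)
      (gaussianReal 0 (∑ j, .mk (u j ^ 2) (sq_nonneg _) * (2 / m : ℝ).toNNReal)) ℙ := fun i =>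
    (hindep.precomp (Prod.mk_right_injective i)).hasLaw_dotProduct_gaussianReal
      (fun j => ⟨(hmeas i j).aemeasurable, hgauss i j⟩) u
  rw [integral_finsetSum _ fun i _ => (hrow i).integrable_max_zero_sq]
  simp_rw [fun i => (hrow i).integral_max_zero_sq]
  have hm' : (0 : ℝ) < m := by exact_mod_cast hm
  simp only [← Finset.sum_mul, NNReal.coe_mul, NNReal.coe_sum, NNReal.coe_mk,
    Real.coe_toNNReal _ (by positivity : (0 : ℝ) ≤ 2 / m), Finset.sum_const, Finset.card_univ,
    Fintype.card_fin, nsmul_eq_mul]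
  field_simp
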